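/- arXiv:1603.01736 — 4 statements merged into one kernel-verified Lean document; each statement's English description precedes it below -/
import Mathlib

section
/- For all k ≥ 2, every complete word over [k] has length at least k²/2 + 3k/2 − 2; that is, ρ(k) ≥ k²/2 + 3k/2 − 2. -/
/-!
Let `a` be the letter whose last occurrence comes earliest, and split `w = p ++ a :: s` there.
Every other letter occurs in `s`, and `p` is complete for the remaining `k - 1` letters (list them
before `a`). If `a` occurs again in `p`, deleting it leaves a complete word on `k - 1` letters, so
`|w| ≥ ρ(k-1) + 2 + (k-1)`; otherwise `s` is complete as well (list the others after `a`), so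
`|w| ≥ 2 ρ(k-1) + 1`. In both cases `2 |w| + 4 ≥ k² + 3k` follows by induction on `k`.
-/

/-- `w` is a complete word over the alphabet `{1,...,k}`. -/
def IsCompleteWord (k : ℕ) (w : List ℕ) : Prop :=
  (∀ x ∈ w, x ∈ Finset.Icc 1 k) ∧
  ∀ σ : Equiv.Perm (Fin k), (List.ofFn fun i => (σ i : ℕ) + 1).Sublist w

theorem List.sublist_of_cons_sublist_append_cons {α : Type*} {a : α} {l p s : List α}
    (h : (a :: l).Sublist (p ++ a :: s)) (hp : a ∉ p) : l.Sublist s := by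
  induction p with
  | nil => exact List.cons_sublist_cons.mp h
  | cons b p ih =>
    rcases List.sublist_cons_iff.mp h with h | ⟨r, hr, -⟩
    · exact ih h fun ha => hp (List.mem_cons_of_mem b ha)
    · exact absurd (List.cons.inj hr).1 fun hab => hp (hab ▸ List.mem_cons_self)

theorem List.exists_split_earliest_last_occurrence {α : Type*} [DecidableEq α] (w : List α)
    (S : Finset α) (hS : S.Nonempty) (hmem : ∀ a ∈ S, a ∈ w) :
    ∃ a ∈ S, ∃ p s, w = p ++ a :: s ∧ a ∉ s ∧ S.erase a ⊆ s.toFinset := by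
  induction w with
  | nil =>
    obtain ⟨a, ha⟩ := hS
    exact absurd (hmem a ha) List.not_mem_nil
  | cons c t ih =>
    by_cases hall : ∀ b ∈ S, b ∈ t
    · obtain ⟨a, haS, p, s, rfl, has, hsub⟩ := ih hall
      exact ⟨a, haS, c :: p, s, rfl, has, hsub⟩
    · push Not at hall
      obtain ⟨b, hbS, hbt⟩ := hall
      obtain rfl : b = c := (List.mem_cons.mp (hmem b hbS)).resolve_right hbt
      refine ⟨b, hbS, [], t, rfl, hbt, fun x hx => ?_⟩
      obtain ⟨hxb, hxS⟩ := Finset.mem_erase.mp hx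
      exact List.mem_toFinset.mpr ((List.mem_cons.mp (hmem x hxS)).resolve_left hxb)

def CompleteOn {α : Type*} [DecidableEq α] (S : Finset α) (w : List α) : Prop :=
  ∀ l : List α, l.Nodup → l.toFinset = S → l.Sublist w

namespace CompleteOn

variable {α : Type*} [DecidableEq α] {S : Finset α} {w p s : List α} {a : α}

theorem card_le_length (h : CompleteOn S w) : S.card ≤ w.length := by
  simpa using (h S.toList S.nodup_toList (by simp)).length_le

theorem mem (h : CompleteOn S w) (ha : a ∈ S) : a ∈ w :=
  (h S.toList S.nodup_toList (by simp)).subset (Finset.mem_toList.mpr ha)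

theorem reverse (h : CompleteOn S w) : CompleteOn S w.reverse := fun l hl hS =>
  List.reverse_sublist.mp <| by
    simpa using h l.reverse (List.nodup_reverse.mpr hl) (by rwa [List.toFinset_reverse])

theorem erase_of_notMem (h : CompleteOn S w) (ha : a ∉ S) : CompleteOn S (w.erase a) :=
  fun l hl hS => by
    have hal : a ∉ l := fun hal => ha (hS ▸ List.mem_toFinset.mpr hal)
    simpa [List.erase_of_not_mem hal] using (h l hl hS).erase a

theorem suffix_of_notMem_prefix (h : CompleteOn S (p ++ a :: s)) (haS : a ∈ S) (hp : a ∉ p) :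
    CompleteOn (S.erase a) s := fun l hl hS => by
  have hal : a ∉ l := fun hal => Finset.notMem_erase a S (hS ▸ List.mem_toFinset.mpr hal)
  refine List.sublist_of_cons_sublist_append_cons (h (a :: l) ?_ ?_) hp
  · exact List.nodup_cons.mpr ⟨hal, hl⟩
  · rw [List.toFinset_cons, hS, Finset.insert_erase haS]

theorem prefix_of_notMem_suffix (h : CompleteOn S (p ++ a :: s)) (haS : a ∈ S) (hs : a ∉ s) :
    CompleteOn (S.erase a) p := by
  have hrev : CompleteOn S (s.reverse ++ a :: p.reverse) := by simpa using h.reverse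
  simpa using (hrev.suffix_of_notMem_prefix haS (by simpa using hs)).reverse

theorem card_sq_add_three_mul_card_le (h : CompleteOn S w) :
    S.card ^ 2 + 3 * S.card ≤ 2 * w.length + 4 := by
  induction hn : S.card generalizing S w with
  | zero => simp
  | succ n ih =>
    obtain ⟨a, haS, p, s, rfl, has, hsub⟩ :=
      List.exists_split_earliest_last_occurrence w S (Finset.card_pos.mp (by omega)) fun _ => h.mem
    have hcard : (S.erase a).card = n := by rw [Finset.card_erase_of_mem haS, hn]; rfl
    have hp := h.prefix_of_notMem_suffix haS has
    have hp_len : n ≤ p.length := hcard ▸ hp.card_le_length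
    have hs_len : n ≤ s.length := hcard ▸ (Finset.card_le_card hsub).trans s.toFinset_card_le
    have hw_len : (p ++ a :: s).length = p.length + 1 + s.length := by simp; omega
    by_cases hap : a ∈ p
    · have hp' := ih (hp.erase_of_notMem (Finset.notMem_erase a S)) hcard
      rw [List.length_erase_of_mem hap] at hp'
      have := List.length_pos_of_mem hap
      have : 2 * (p.length - 1) + 2 = 2 * p.length := by omega
      rw [hw_len]
      nlinarith
    · have hp' := ih hp hcard
      have hs' := ih (h.suffix_of_notMem_prefix haS hap) hcard
      rw [hw_len]
      -- for `n ≤ 1` the inductive bound is too weak, but `|p|, |s| ≥ n` suffice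
      rcases Nat.lt_or_ge n 2 with hn2 | hn2
      · interval_cases n <;> omega
      · nlinarith

end CompleteOn

theorem IsCompleteWord.completeOn {k : ℕ} {w : List ℕ} (hw : IsCompleteWord k w) :
    CompleteOn (Finset.Icc 1 k) w := by
  intro l hl hS
  have hlen : l.length = k := by
    rw [← List.toFinset_card_of_nodup hl, hS, Nat.card_Icc, Nat.add_sub_cancel]
  have hbound (i : ℕ) (hi : i < l.length) : 1 ≤ l[i] ∧ l[i] ≤ k := by
    have hmem : l[i] ∈ l.toFinset := List.mem_toFinset.mpr (l.getElem_mem hi)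
    simpa [hS] using hmem
  let f : Fin k → Fin k := fun i =>
    ⟨l[(i : ℕ)]'(hlen ▸ i.2) - 1, by have := hbound i (hlen ▸ i.2); omega⟩
  have hf : Function.Injective f := fun i j hij => by
    have hi := hbound i (hlen ▸ i.2)
    have hj := hbound j (hlen ▸ j.2)
    have hval : l[(i : ℕ)]'(hlen ▸ i.2) = l[(j : ℕ)]'(hlen ▸ j.2) := by
      have := congrArg Fin.val hij
      simp only [f] at this
      omega
    exact Fin.ext (hl.getElem_inj_iff.mp hval)
  have hσ := hw.2 (Equiv.ofBijective f (Finite.injective_iff_bijective.mp hf))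
  convert hσ
  refine List.ext_getElem (by simp [hlen]) fun i hi _ => ?_
  have := hbound i hi
  simp only [List.getElem_ofFn, Equiv.ofBijective_apply, f]
  omega

theorem complete_word_length_lower_bound_general (k : ℕ) (w : List ℕ)
    (hw : IsCompleteWord k w) :
    ((k : ℚ) ^ 2 / 2 + 3 * k / 2 - 2) ≤ (w.length : ℚ) := by
  have h := hw.completeOn.card_sq_add_three_mul_card_le
  rw [Nat.card_Icc, Nat.add_sub_cancel] at h
  have hq : (k : ℚ) ^ 2 + 3 * k ≤ 2 * w.length + 4 := by exact_mod_cast h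
  linarith

/-- For all k ≥ 2, every complete word over [k] has length at least k²/2 + 3k/2 − 2. -/
theorem complete_word_length_lower_bound (k : ℕ) (hk : 2 ≤ k) (w : List ℕ)
    (hw : IsCompleteWord k w) :
    ((k : ℚ) ^ 2 / 2 + 3 * k / 2 - 2) ≤ (w.length : ℚ) :=
  complete_word_length_lower_bound_general k w hw
end

section
/- Every superpattern for all preferential arrangements of length k over [k] is a complete word (contains every permutation of [k] as a subsequence), and conversely every complete word on [k] contains an order-isomorphic copy of every preferential arrangement of length k as a subsequence. Hence n(k,k) = ρ(k) for all k ≥ 2. -/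
/-- `u` and `v` are order isomorphic. -/
def SamePattern (u v : List ℕ) : Prop :=
  ∃ h : u.length = v.length,
    ∀ i j : Fin u.length,
      u.get i < u.get j ↔ v.get (Fin.cast h i) < v.get (Fin.cast h j)

/-- `w` contains an order-isomorphic copy of the pattern `p` as a subsequence. -/
def ContainsPattern (w p : List ℕ) : Prop :=
  ∃ v : List ℕ, v.Sublist w ∧ SamePattern p v

/-- `w` is a word over {1,...,k} containing every preferential arrangement of
length k over [k] (every length-k string over [k], up to order isomorphism). -/
def IsPASuperpattern (k : ℕ) (w : List ℕ) : Prop :=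
  (∀ x ∈ w, x ∈ Finset.Icc 1 k) ∧
  ∀ p : List ℕ, p.length = k → (∀ x ∈ p, x ∈ Finset.Icc 1 k) → ContainsPattern w p

/-!
A copy of a permutation of `[k]` inside a word over `[k]` consists of `k` distinct letters of
`[k]` in the same relative order, so it is that permutation literally: superpatterns are
complete.

Conversely, standardizing a preferential arrangement `p` gives the letter `t` a block of
`count t p` consecutive values, and blocks of larger letters lie higher. A word complete for
`S` contains a copy of `p` in which every `t` is replaced by one value of its block. It is
built greedily: for the first letter `t`, cut the word at the first occurrence of the member
`a` of `t`'s block whose first occurrence comes last. What follows the cut is complete for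
`S \ {a}`, and any other value of the block, chosen for the later copies of `t`, already
occurs before the cut.
-/

open Finset Function
open scoped List

section Lists

variable {α : Type*}

theorem List.sublist_of_cons_sublist_append_cons_s5 {a : α} {l w₁ w₂ : List α}
    (h : a :: l <+ w₁ ++ a :: w₂) (ha : a ∉ w₁) : l <+ w₂ := by
  induction w₁ with
  | nil => exact List.cons_sublist_cons.1 h
  | cons c w₁ ih =>
    rw [List.mem_cons, not_or] at ha
    rcases List.sublist_cons_iff.1 h with h | ⟨r, hr, -⟩
    · exact ih h ha.2
    · exact absurd (List.cons_eq_cons.1 hr).1 ha.1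

theorem List.exists_latest_first_occurrence [DecidableEq α] (T : Finset α) (hT : T.Nonempty)
    {w : List α} (hw : ∀ x ∈ T, x ∈ w) :
    ∃ a ∈ T, ∃ w₁ w₂, w = w₁ ++ a :: w₂ ∧ a ∉ w₁ ∧ ∀ x ∈ T, x ≠ a → x ∈ w₁ := by
  induction w generalizing T with
  | nil =>
    obtain ⟨x, hx⟩ := hT
    exact absurd (hw x hx) List.not_mem_nil
  | cons c w ih =>
    by_cases hc : (T.erase c).Nonempty
    · have hw' : ∀ x ∈ T.erase c, x ∈ w := fun x hx =>
        (List.mem_cons.1 (hw x (Finset.mem_of_mem_erase hx))).resolve_left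
          (Finset.ne_of_mem_erase hx)
      obtain ⟨a, ha, w₁, w₂, rfl, haw₁, hlate⟩ := ih (T.erase c) hc hw'
      refine ⟨a, Finset.mem_of_mem_erase ha, c :: w₁, w₂, rfl, ?_, fun x hx hxa => ?_⟩
      · simp [haw₁, Finset.ne_of_mem_erase ha]
      · by_cases hxc : x = c
        · simp [hxc]
        · exact List.mem_cons_of_mem _ (hlate x (Finset.mem_erase.2 ⟨hxc, hx⟩) hxa)
    · have hTc : T = {c} := by
        rw [not_nonempty_iff_eq_empty, erase_eq_empty_iff] at hc
        exact hc.resolve_left hT.ne_empty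
      subst hTc
      exact ⟨c, mem_singleton_self c, [], w, rfl, List.not_mem_nil,
        fun x hx hxc => absurd (mem_singleton.1 hx) hxc⟩

end Lists

section Complete

variable {α β : Type*} [DecidableEq α] [DecidableEq β]

def CompleteFor (S : Finset α) (w : List α) : Prop :=
  ∀ l : List α, l.Nodup → l.toFinset = S → l <+ w

theorem CompleteFor.mem {S : Finset α} {w : List α} (h : CompleteFor S w) {x : α}
    (hx : x ∈ S) : x ∈ w :=
  (h S.toList S.nodup_toList S.toList_toFinset).subset (mem_toList.2 hx)

theorem CompleteFor.of_append_cons {S : Finset α} {w₁ w₂ : List α} {a : α}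
    (h : CompleteFor S (w₁ ++ a :: w₂)) (ha : a ∈ S) (haw₁ : a ∉ w₁) :
    CompleteFor (S.erase a) w₂ := by
  intro l hl hlS
  have hal : a ∉ l := fun hal => by simpa [hlS] using List.mem_toFinset.2 hal
  refine List.sublist_of_cons_sublist_append_cons_s5 (h (a :: l) (hl.cons hal) ?_) haw₁
  rw [List.toFinset_cons, hlS, insert_erase ha]

theorem count_le_card_inter_erase {A : β → Finset α} (hA : Pairwise (Disjoint on A))
    {S : Finset α} {r : List β} {t : β} {a : α} (ha : a ∈ A t ∩ S)
    (hcount : ∀ u, (t :: r).count u ≤ #(A u ∩ S)) (u : β) :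
    r.count u ≤ #(A u ∩ S.erase a) := by
  have := hcount u
  rw [inter_erase]
  rcases eq_or_ne u t with rfl | hut
  · rw [card_erase_of_mem ha]
    simp only [List.count_cons_self] at this
    omega
  · have hau : a ∉ A u ∩ S := fun hau =>
      disjoint_left.1 (hA hut) (mem_inter.1 hau).1 (mem_inter.1 ha).1
    rwa [erase_eq_of_notMem hau, ← List.count_cons_of_ne hut.symm]

theorem CompleteFor.exists_map_sublist [Nonempty α] (r : List β) {S : Finset α} {w : List α}
    (A : β → Finset α) (hA : Pairwise (Disjoint on A)) (hC : CompleteFor S w)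
    (hcount : ∀ t, r.count t ≤ #(A t ∩ S)) :
    ∃ b : β → α, (∀ t ∈ r, b t ∈ A t ∩ S) ∧ r.map b <+ w := by
  induction r generalizing S w with
  | nil => exact ⟨fun _ => Classical.arbitrary α, by simp, by simp⟩
  | cons t r ih =>
    have hpos : 0 < #(A t ∩ S) := (r.count t).succ_pos.trans_le (by simpa using hcount t)
    obtain ⟨a, ha, w₁, w₂, rfl, haw₁, hlate⟩ := List.exists_latest_first_occurrence
      (A t ∩ S) (card_pos.1 hpos) fun x hx => hC.mem (mem_inter.1 hx).2
    obtain ⟨b, hb, hsub⟩ := ih (hC.of_append_cons (mem_inter.1 ha).2 haw₁)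
      (count_le_card_inter_erase hA ha hcount)
    have hb' : ∀ u ∈ r, b u ∈ A u ∩ S := fun u hu =>
      inter_subset_inter_left (erase_subset a S) (hb u hu)
    by_cases ht : t ∈ r
    · -- `t` recurs, so `b t` is a member of `A t ∩ S` other than `a`, hence occurs in `w₁`
      refine ⟨b, List.forall_mem_cons.2 ⟨hb' t ht, hb'⟩, ?_⟩
      obtain ⟨hbt, hbtS⟩ := mem_inter.1 (hb t ht)
      have hbtw₁ : b t ∈ w₁ :=
        hlate _ (mem_inter.2 ⟨hbt, mem_of_mem_erase hbtS⟩) (ne_of_mem_erase hbtS)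
      exact (List.singleton_sublist.2 hbtw₁).append (hsub.cons a)
    · refine ⟨update b t a, List.forall_mem_cons.2 ⟨by simpa using ha, ?_⟩, ?_⟩
      · intro u hu
        rw [update_of_ne (ne_of_mem_of_not_mem hu ht)]
        exact hb' u hu
      · rw [List.map_cons, update_self,
          List.map_congr_left fun u hu => update_of_ne (ne_of_mem_of_not_mem hu ht) a b]
        exact (hsub.cons_cons a).trans (List.sublist_append_right w₁ _)

end Complete

section RankBlocks

/-- The values taken by the occurrences of `t` when `p` is standardized to a permutation. -/
def rankBlock (p : List ℕ) (t : ℕ) : Finset ℕ :=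
  Ioc (p.countP (· < t)) (p.countP (· ≤ t))

theorem List.countP_le_eq_countP_lt_add_count (p : List ℕ) (t : ℕ) :
    p.countP (· ≤ t) = p.countP (· < t) + p.count t := by
  induction p with
  | nil => simp
  | cons x p ih =>
    simp only [List.countP_cons, List.count_cons, ih, beq_iff_eq, decide_eq_true_eq]
    split_ifs <;> omega

theorem card_rankBlock (p : List ℕ) (t : ℕ) : #(rankBlock p t) = p.count t := by
  simp [rankBlock, p.countP_le_eq_countP_lt_add_count]

theorem rankBlock_subset_Icc (p : List ℕ) (t : ℕ) : rankBlock p t ⊆ Icc 1 p.length := by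
  intro x hx
  have := p.countP_le_length (p := (· ≤ t))
  simp only [rankBlock, mem_Ioc] at hx
  simp only [mem_Icc]
  omega

theorem lt_of_mem_rankBlock {p : List ℕ} {t t' x y : ℕ} (htt' : t < t')
    (hx : x ∈ rankBlock p t) (hy : y ∈ rankBlock p t') : x < y := by
  have : p.countP (· ≤ t) ≤ p.countP (· < t') :=
    List.countP_mono_left fun z _ hz => by simp only [decide_eq_true_eq] at hz ⊢; omega
  simp only [rankBlock, mem_Ioc] at hx hy
  omega

theorem pairwise_disjoint_rankBlock (p : List ℕ) : Pairwise (Disjoint on rankBlock p) := by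
  intro t t' htt'
  refine disjoint_left.2 fun x hx hx' => ?_
  rcases htt'.lt_or_gt with h | h
  · exact lt_irrefl x (lt_of_mem_rankBlock h hx hx')
  · exact lt_irrefl x (lt_of_mem_rankBlock h hx' hx)

end RankBlocks

theorem samePattern_map (p : List ℕ) {b : ℕ → ℕ} (hb : StrictMonoOn b {x | x ∈ p}) :
    SamePattern p (p.map b) :=
  ⟨(p.length_map b).symm, fun i j => by
    simpa using (hb.lt_iff_lt (p.getElem_mem i.isLt) (p.getElem_mem j.isLt)).symm⟩

theorem IsCompleteWord.completeFor_Icc {k : ℕ} {w : List ℕ} (hw : IsCompleteWord k w) :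
    CompleteFor (Icc 1 k) w := by
  intro l hl hlS
  have hlen : l.length = k := by simp [← List.toFinset_card_of_nodup hl, hlS]
  have hmem : ∀ (i : ℕ) (hi : i < l.length), l[i] ∈ Icc 1 k := fun i hi =>
    hlS ▸ List.mem_toFinset.2 (l.getElem_mem hi)
  let f : Fin k → Fin k := fun i =>
    ⟨l[(i : ℕ)]'(by omega) - 1, by
      have := hmem i (by omega)
      simp only [mem_Icc] at this
      omega⟩
  have hf : Injective f := fun i j hij => by
    have hi := hmem i (by omega)
    have hj := hmem j (by omega)
    simp only [mem_Icc] at hi hj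
    simp only [f, Fin.mk.injEq] at hij
    exact Fin.ext ((List.Nodup.getElem_inj_iff hl).1 (by omega))
  convert hw.2 (Equiv.ofBijective f hf.bijective_of_finite)
  refine List.ext_getElem (by simp [hlen]) fun i h₁ h₂ => ?_
  have := hmem i h₁
  simp only [mem_Icc] at this
  simp only [f, List.getElem_ofFn, Equiv.ofBijective_apply]
  omega

theorem IsCompleteWord.containsPattern {k : ℕ} {w : List ℕ} (hw : IsCompleteWord k w)
    {p : List ℕ} (hp : p.length = k) : ContainsPattern w p := by
  have hcount : ∀ t, p.count t ≤ #(rankBlock p t ∩ Icc 1 k) := fun t => by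
    rw [inter_eq_left.2 (hp ▸ rankBlock_subset_Icc p t), card_rankBlock]
  obtain ⟨b, hb, hsub⟩ := hw.completeFor_Icc.exists_map_sublist p (rankBlock p)
    (pairwise_disjoint_rankBlock p) hcount
  refine ⟨p.map b, hsub, samePattern_map p fun s hs t ht hst => ?_⟩
  exact lt_of_mem_rankBlock hst (mem_inter.1 (hb s hs)).1 (mem_inter.1 (hb t ht)).1

theorem StrictMono.apply_eq_val_add_one {k : ℕ} {g : Fin k → ℕ} (hg : StrictMono g)
    (hgk : ∀ m, g m ∈ Icc 1 k) (m : Fin k) : g m = m + 1 := by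
  have hcard : #(Icc 1 k) = k := by simp
  have hsucc : StrictMono fun m : Fin k => (m : ℕ) + 1 := fun _ _ h => Nat.succ_lt_succ h
  rw [orderEmbOfFin_unique hcard hgk hg,
    ← orderEmbOfFin_unique hcard (fun m => by simp [Nat.succ_le_of_lt m.isLt]) hsucc]

theorem eq_ofFn_of_samePattern {k : ℕ} (σ : Equiv.Perm (Fin k)) {v : List ℕ}
    (hv : ∀ x ∈ v, x ∈ Icc 1 k) (h : SamePattern (List.ofFn fun i => (σ i : ℕ) + 1) v) :
    v = List.ofFn fun i => (σ i : ℕ) + 1 := by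
  obtain ⟨hlen, hord⟩ := h
  have hk : v.length = k := by simpa using hlen.symm
  let g : Fin k → ℕ := fun m => v[(σ.symm m : ℕ)]'(by omega)
  have hg : StrictMono g := fun m m' hmm' => by
    simpa using (hord (Fin.cast (List.length_ofFn).symm (σ.symm m))
      (Fin.cast (List.length_ofFn).symm (σ.symm m'))).1 (by simpa using hmm')
  refine List.ext_getElem (by simp [hk]) fun i h₁ h₂ => ?_
  simpa [g] using
    hg.apply_eq_val_add_one (fun m => hv _ (List.getElem_mem _)) (σ ⟨i, by omega⟩)

theorem IsPASuperpattern.isCompleteWord {k : ℕ} {w : List ℕ} (hw : IsPASuperpattern k w) :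
    IsCompleteWord k w := by
  refine ⟨hw.1, fun σ => ?_⟩
  have hσ : ∀ x ∈ List.ofFn fun i => (σ i : ℕ) + 1, x ∈ Icc 1 k := by
    simp only [List.mem_ofFn, mem_Icc]
    rintro _ ⟨i, rfl⟩
    exact ⟨Nat.le_add_left 1 _, (σ i).isLt⟩
  obtain ⟨v, hvw, hpat⟩ := hw.2 _ (List.length_ofFn) hσ
  rwa [← eq_ofFn_of_samePattern σ (fun x hx => hw.1 x (hvw.subset hx)) hpat]

theorem superpattern_iff_complete_general (k : ℕ) :
    (∀ w : List ℕ, IsPASuperpattern k w ↔ IsCompleteWord k w) ∧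
    sInf {n : ℕ | ∃ w : List ℕ, IsPASuperpattern k w ∧ w.length = n} =
      sInf {n : ℕ | ∃ w : List ℕ, IsCompleteWord k w ∧ w.length = n} := by
  have hiff : ∀ w : List ℕ, IsPASuperpattern k w ↔ IsCompleteWord k w := fun w =>
    ⟨IsPASuperpattern.isCompleteWord, fun hw => ⟨hw.1, fun _ hp _ => hw.containsPattern hp⟩⟩
  exact ⟨hiff, by simp only [hiff]⟩

/-- A word over [k] is a superpattern for all length-k preferential arrangements
iff it is a complete word; consequently n(k,k) = ρ(k) for all k ≥ 2. -/
theorem superpattern_iff_complete (k : ℕ) (hk : 2 ≤ k) :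
    (∀ w : List ℕ, IsPASuperpattern k w ↔ IsCompleteWord k w) ∧
    sInf {n : ℕ | ∃ w : List ℕ, IsPASuperpattern k w ∧ w.length = n} =
      sInf {n : ℕ | ∃ w : List ℕ, IsCompleteWord k w ∧ w.length = n} :=
  superpattern_iff_complete_general k
end

section
/- For k ≥ 10, ⌈k² − (7/3)k + 19/3⌉ < k² − 2k + 4. Consequently, since ρ(k) ≤ ⌈k² − 7k/3 + 19/3⌉ and n(k,k) = ρ(k), the conjecture n(k,k) = k² − 2k + 4 fails for k ≥ 10. -/
/-- For k ≥ 10, ⌈k² − (7/3)k + 19/3⌉ < k² − 2k + 4; consequently, if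
ρ(k) ≤ ⌈k² − 7k/3 + 19/3⌉ and n(k,k) = ρ(k), then n(k,k) ≠ k² − 2k + 4, i.e.
the conjecture n(k,k) = k² − 2k + 4 fails for k ≥ 10. -/
theorem conjecture_fails (k : ℕ) (hk : 10 ≤ k) :
    ⌈(k : ℚ) ^ 2 - 7 / 3 * (k : ℚ) + 19 / 3⌉ < (k : ℤ) ^ 2 - 2 * (k : ℤ) + 4 ∧
    ∀ ρ n : ℤ, ρ ≤ ⌈(k : ℚ) ^ 2 - 7 / 3 * (k : ℚ) + 19 / 3⌉ → n = ρ →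
      n ≠ (k : ℤ) ^ 2 - 2 * (k : ℤ) + 4 := by
  have hkq : (10 : ℚ) ≤ (k : ℚ) := by exact_mod_cast hk
  have h : ⌈(k : ℚ) ^ 2 - 7 / 3 * (k : ℚ) + 19 / 3⌉ ≤ (k : ℤ) ^ 2 - 2 * (k : ℤ) + 3 := by
    rw [Int.ceil_le]
    push_cast
    nlinarith
  have hlt : ⌈(k : ℚ) ^ 2 - 7 / 3 * (k : ℚ) + 19 / 3⌉ < (k : ℤ) ^ 2 - 2 * (k : ℤ) + 4 :=
    lt_of_le_of_lt h (by linarith)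
  exact ⟨hlt, fun ρ n hρ hn hne => by omega⟩
end

section
/- For every d ≥ 6, ν(3,d) = 7 + (d − 5), i.e., the shortest word over [d] using every letter of [d] at least once and containing an order-isomorphic copy of every preferential arrangement of length 3 has length d + 2. -/
/-- A decidable version of `SamePattern`. -/
def SP' (u v : List ℕ) : Prop :=
  u.length = v.length ∧ ∀ i j : Fin u.length,
    (u.get i < u.get j ↔ v.getD i 0 < v.getD j 0)

instance (u v : List ℕ) : Decidable (SP' u v) := by
  unfold SP'; infer_instance

lemma SP'_samePattern {u v : List ℕ} (h : SP' u v) : SamePattern u v := by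
  obtain ⟨hl, hiff⟩ := h
  refine ⟨hl, fun i j => ?_⟩
  have hi : (i : ℕ) < v.length := hl ▸ i.isLt
  have hj : (j : ℕ) < v.length := hl ▸ j.isLt
  have e1 : v.get (Fin.cast hl i) = v.getD i 0 := by
    simp [List.getD_eq_getElem?_getD, List.getElem?_eq_getElem hi, List.get_eq_getElem]
  have e2 : v.get (Fin.cast hl j) = v.getD j 0 := by
    simp [List.getD_eq_getElem?_getD, List.getElem?_eq_getElem hj, List.get_eq_getElem]
  rw [e1, e2]; exact hiff i j

lemma containsPattern_of {w p : List ℕ}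
    (h : ∃ v ∈ w.sublists, SP' p v) : ContainsPattern w p := by
  obtain ⟨v, hv, hsp⟩ := h
  exact ⟨v, (List.mem_sublists).1 hv, SP'_samePattern hsp⟩

/-- The universal prefix word. -/
def uw : List ℕ := [1, 3, 4, 3, 2, 3, 5]

lemma uw_contains (p : List ℕ) (hp : p.length = 3)
    (hmem : ∀ x ∈ p, x ∈ Finset.Icc 1 3) : ContainsPattern uw p := by
  match p, hp with
  | [a, b, c], _ =>
    have ha := hmem a (by simp)
    have hb := hmem b (by simp)
    have hc := hmem c (by simp)
    rw [Finset.mem_Icc] at ha hb hc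
    obtain ⟨ha1, ha2⟩ := ha
    obtain ⟨hb1, hb2⟩ := hb
    obtain ⟨hc1, hc2⟩ := hc
    apply containsPattern_of
    interval_cases a <;> interval_cases b <;> interval_cases c <;> decide

lemma sublist_containsPattern {w w' p : List ℕ} (hw : w.Sublist w')
    (h : ContainsPattern w p) : ContainsPattern w' p := by
  obtain ⟨v, hv, hsp⟩ := h
  exact ⟨v, hv.trans hw, hsp⟩

/-- For d ≥ 6, ν(3,d) = d + 2: the shortest word over [d] using every letter of
[d] at least once and containing an order-isomorphic copy of every preferential
arrangement of length 3 as a subsequence has length 7 + (d − 5) = d + 2. -/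
theorem nu_three_d (d : ℕ) (hd : 6 ≤ d) :
    IsLeast {n : ℕ | ∃ w : List ℕ, w.length = n ∧
      (∀ x ∈ w, x ∈ Finset.Icc 1 d) ∧ (∀ x ∈ Finset.Icc 1 d, x ∈ w) ∧
      ∀ p : List ℕ, p.length = 3 → (∀ x ∈ p, x ∈ Finset.Icc 1 3) →
        ContainsPattern w p} (d + 2) := by
  constructor
  · -- membership: the word uw ++ [6, …, d]
    refine ⟨uw ++ List.range' 6 (d - 5), ?_, ?_, ?_, ?_⟩
    · simp [uw]; omega
    · intro x hx
      rcases List.mem_append.1 hx with h | h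
      · have h5 : 1 ≤ x ∧ x ≤ 5 := by
          have : ∀ y ∈ uw, 1 ≤ y ∧ y ≤ 5 := by decide
          exact this x h
        rw [Finset.mem_Icc]; omega
      · rw [List.mem_range'_1] at h
        rw [Finset.mem_Icc]; omega
    · intro x hx
      rw [Finset.mem_Icc] at hx
      obtain ⟨hx1, hx2⟩ := hx
      rcases le_or_gt x 5 with h5 | h5
      · refine List.mem_append.2 (Or.inl ?_)
        interval_cases x <;> decide
      · refine List.mem_append.2 (Or.inr ?_)
        rw [List.mem_range'_1]; omega
    · intro p hp hmem
      exact sublist_containsPattern (List.sublist_append_left _ _) (uw_contains p hp hmem)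
  · -- lower bound
    rintro n ⟨w, hlen, hsub, hall, hpat⟩
    -- pattern 111 forces a letter to appear three times
    obtain ⟨v, hv, hl, hiff⟩ := hpat [1, 1, 1] rfl (by decide)
    have hvl : v.length = 3 := by simpa using hl.symm
    match v, hvl with
    | [a, b, c], _ =>
      have h01 := hiff ⟨0, by simp⟩ ⟨1, by simp⟩
      have h10 := hiff ⟨1, by simp⟩ ⟨0, by simp⟩
      have h12 := hiff ⟨1, by simp⟩ ⟨2, by simp⟩
      have h21 := hiff ⟨2, by simp⟩ ⟨1, by simp⟩
      simp [List.get] at h01 h10 h12 h21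
      have hab : a = b := le_antisymm h10 h01
      have hbc : b = c := le_antisymm h21 h12
      subst hab; subst hbc
      have hcount : 3 ≤ w.count a := by
        have := hv.count_le a
        simpa using this
      have hamem : a ∈ Finset.Icc 1 d := hsub a (hv.subset (by simp))
      -- toFinset = Icc 1 d
      have hfin : w.toFinset = Finset.Icc 1 d := by
        apply Finset.Subset.antisymm
        · intro x hx; exact hsub x (List.mem_toFinset.1 hx)
        · intro x hx; exact List.mem_toFinset.2 (hall x hx)
      have hlen2 : w.length = ∑ x ∈ Finset.Icc 1 d, w.count x := by
        have := Multiset.toFinset_sum_count_eq (w : Multiset ℕ)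
        simpa [hfin] using this.symm
      have hsum : d + 2 ≤ ∑ x ∈ Finset.Icc 1 d, w.count x := by
        rw [← Finset.add_sum_erase _ _ hamem]
        have h1 : d - 1 ≤ ∑ x ∈ (Finset.Icc 1 d).erase a, w.count x := by
          have hcard : ((Finset.Icc 1 d).erase a).card = d - 1 := by
            rw [Finset.card_erase_of_mem hamem]
            simp [Nat.card_Icc]
          calc d - 1 = ∑ _x ∈ (Finset.Icc 1 d).erase a, 1 := by
                simp [hcard]
            _ ≤ _ := by
                apply Finset.sum_le_sum
                intro x hx
                have hxw : x ∈ w := hall x (Finset.mem_of_mem_erase hx)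
                exact List.count_pos_iff.2 hxw
        omega
      omega
end
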